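/- arXiv:math/0701722 — 3 statements merged into one kernel-verified Lean document; each statement's English description precedes it below -/
import Mathlib

section
/- Let G be a group acting transitively on a set Ω, let c ∈ G be a central element of order 2 generating a normal subgroup C, and let Ḡ ≤ G be a complement of C (so G = C × Ḡ internally) such that Ḡ has exactly two orbits on Ω. If H ≤ Ḡ is a subgroup of index 2 whose image acts transitively on the set of C-orbits of Ω, and g ∈ Ḡ \ H, then K = ⟨H, c·g⟩ is a complement of C in G that acts transitively on Ω. -/
/-!
Let `ε : Ḡ → {0, 1}` be the character with kernel `H`. Then `K = ⟨H, c g⟩` is the twisted copy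
`{c ^ ε(b) * b | b ∈ Ḡ} = H ∪ c (Ḡ \ H)` of `Ḡ`, which meets `C` trivially because `c ∉ Ḡ` and
`c * c ∈ H`, and generates `G` together with `C`.

For transitivity: if `c` mapped some point into its own `Ḡ`-orbit, that orbit would be stable under
`C` and `Ḡ`, hence under `G = C Ḡ`, so `Ḡ` would be transitive. Thus `c` swaps the two `Ḡ`-orbits,
`H` is transitive on each of them, and `c g H` carries each one onto the other.
-/

open Subgroup MulAction
open scoped Pointwise

section

variable {G : Type*} [Group G]

namespace Subgroup

theorem mul_mem_iff_of_relIndex_eq_two {H N : Subgroup G} (h : H.relIndex N = 2)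
    {a b : G} (ha : a ∈ N) (hb : b ∈ N) : a * b ∈ H ↔ (a ∈ H ↔ b ∈ H) := by
  simpa [mem_subgroupOf] using mul_mem_iff_of_index_two (a := ⟨a, ha⟩) (b := ⟨b, hb⟩) h

theorem mem_zpowers_iff_of_mul_self_eq_one {c x : G} (hc : c * c = 1) :
    x ∈ zpowers c ↔ x = 1 ∨ x = c := by
  have hc2 : c ^ (2 : ℤ) = 1 := by rw [zpow_two, hc]
  constructor
  · rintro ⟨n, rfl⟩
    obtain ⟨k, rfl | rfl⟩ := Int.even_or_odd' n <;> simp [zpow_add, zpow_mul, hc2]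
  · rintro (rfl | rfl)
    exacts [one_mem _, mem_zpowers _]

theorem mem_zpowers_sup_of_mul_mem {c x : G} (hc : c * c = 1) {K : Subgroup G} (h : c * x ∈ K) :
    x ∈ zpowers c ⊔ K := by
  have : x = c * (c * x) := by rw [← mul_assoc, hc, one_mul]
  rw [this]
  exact mul_mem (mem_sup_left (mem_zpowers c)) (mem_sup_right h)

variable {N H : Subgroup G} (hHN : H ≤ N) (hidx : H.relIndex N = 2) {c : G}
  (hc : c ∈ center G) (hc2 : c * c = 1)

def twist : Subgroup G where
  carrier := {x | x ∈ H ∨ (c * x ∈ N ∧ c * x ∉ H)}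
  one_mem' := Or.inl H.one_mem
  mul_mem' := by
    have parity := fun {a b} => mul_mem_iff_of_relIndex_eq_two (a := a) (b := b) hidx
    have hca : ∀ a b : G, c * (a * b) = a * (c * b) := fun a b => by
      rw [← mul_assoc, ← mul_assoc, (mem_center_iff.1 hc a).symm]
    rintro a b (ha | ⟨haN, haH⟩) (hb | ⟨hbN, hbH⟩)
    · exact Or.inl (mul_mem ha hb)
    · right
      rw [hca]
      exact ⟨mul_mem (hHN ha) hbN, by rw [parity (hHN ha) hbN]; tauto⟩
    · right
      rw [← mul_assoc]
      exact ⟨mul_mem haN (hHN hb), by rw [parity haN (hHN hb)]; tauto⟩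
    · have : a * b = c * a * (c * b) := by rw [mul_assoc, ← hca, ← mul_assoc, hc2, one_mul]
      left
      rw [this]
      exact (parity haN hbN).2 (by tauto)
  inv_mem' := by
    rintro a (ha | ⟨haN, haH⟩)
    · exact Or.inl (inv_mem ha)
    · have : c * a⁻¹ = (c * a)⁻¹ := by
        rw [mul_inv_rev, inv_eq_of_mul_eq_one_right hc2, (mem_center_iff.1 hc _)]
      right
      rw [this]
      exact ⟨inv_mem haN, fun h => haH (inv_mem_iff.1 h)⟩

theorem sup_zpowers_mul_eq_twist {g : G} (hg : g ∈ N) (hgH : g ∉ H) :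
    H ⊔ zpowers (c * g) = twist hHN hidx hc hc2 := by
  have parity := fun {a b} => mul_mem_iff_of_relIndex_eq_two (a := a) (b := b) hidx
  refine le_antisymm (sup_le (fun x hx => Or.inl hx) ?_) fun x hx => ?_
  · rw [zpowers_le]
    refine Or.inr ⟨?_, ?_⟩ <;> rwa [← mul_assoc, hc2, one_mul]
  · rcases hx with hx | ⟨hxN, hxH⟩
    · exact mem_sup_left hx
    · have hgx : g⁻¹ * (c * x) ∈ H := by
        rw [parity (inv_mem hg) hxN, inv_mem_iff]
        tauto
      have : x = c * g * (g⁻¹ * (c * x)) := by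
        rw [mul_assoc, mul_inv_cancel_left, ← mul_assoc, hc2, one_mul]
      rw [this]
      exact mul_mem (mem_sup_right (mem_zpowers _)) (mem_sup_left hgx)

variable {hHN hidx hc hc2}

theorem zpowers_inf_twist (hcN : c ∉ N) : zpowers c ⊓ twist hHN hidx hc hc2 = ⊥ := by
  rw [eq_bot_iff_forall]
  rintro x ⟨hxc, hx⟩
  rcases (mem_zpowers_iff_of_mul_self_eq_one hc2).1 hxc with rfl | rfl
  · rfl
  · rcases hx with hx | ⟨-, hx⟩
    · exact absurd (hHN hx) hcN
    · exact absurd (hc2 ▸ H.one_mem) hx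

theorem zpowers_sup_twist : zpowers c ⊔ twist hHN hidx hc hc2 = zpowers c ⊔ N := by
  refine le_antisymm (sup_le le_sup_left fun x hx => ?_) (sup_le le_sup_left fun x hx => ?_)
  · rcases hx with hx | ⟨hxN, -⟩
    exacts [mem_sup_right (hHN hx), mem_zpowers_sup_of_mul_mem hc2 hxN]
  · by_cases hxH : x ∈ H
    · exact mem_sup_right (Or.inl hxH)
    · refine mem_zpowers_sup_of_mul_mem hc2 (Or.inr ⟨?_, ?_⟩) <;>
        rwa [← mul_assoc, hc2, one_mul]

end Subgroup

namespace MulAction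

variable {Ω : Type*} [MulAction G Ω]

theorem isPretransitive_of_smul_mem_orbit {c : G} (hc : c ∈ center G) (hc2 : c * c = 1)
    {N : Subgroup G} (hsup : zpowers c ⊔ N = ⊤) [IsPretransitive G Ω] {w : Ω}
    (hw : c • w ∈ orbit N w) : IsPretransitive N Ω := by
  have hcO : ∀ u ∈ orbit N w, c • u ∈ orbit N w := by
    rintro _ ⟨n, rfl⟩
    obtain ⟨m, hm⟩ := hw
    refine ⟨n * m, ?_⟩
    simp only [Subgroup.smul_def, mul_smul] at hm ⊢
    rw [hm, ← mul_smul, ← mul_smul, mem_center_iff.1 hc]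
  have hstab : ⊤ ≤ stabilizer G (orbit N w) := by
    rw [← hsup, sup_le_iff, zpowers_le]
    constructor
    · refine mem_stabilizer_set.2 fun u => ⟨fun h => ?_, hcO u⟩
      simpa [← mul_smul, hc2] using hcO _ h
    · intro n hn
      exact mem_stabilizer_iff.2 (smul_orbit (⟨n, hn⟩ : N) w)
  rw [isPretransitive_iff_orbit_eq_univ w, Set.eq_univ_iff_forall]
  intro u
  obtain ⟨a, rfl⟩ := exists_smul_eq G w u
  exact (mem_stabilizer_set.1 (hstab trivial) w).2 (mem_orbit_self w)

theorem exists_mem_sup_zpowers_smul_eq {c g : G} {H N : Subgroup G} (hHN : H ≤ N) (hg : g ∈ N)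
    (hcover : ∀ x y : Ω, ∃ h ∈ H, h • x = y ∨ c • (h • x) = y)
    (hsep : ∀ w : Ω, c • w ∉ orbit N w) (x y : Ω) :
    ∃ k ∈ H ⊔ zpowers (c * g), k • x = y := by
  obtain ⟨h, hh, rfl | rfl⟩ := hcover x y
  · exact ⟨h, mem_sup_left hh, rfl⟩
  obtain ⟨h', hh', hx | hx⟩ := hcover x (g⁻¹ • h • x)
  · refine ⟨c * g * h', mul_mem (mem_sup_right (mem_zpowers _)) (mem_sup_left hh'), ?_⟩
    rw [mul_smul, mul_smul, hx, smul_inv_smul]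
  · refine absurd ⟨⟨g⁻¹ * h * h'⁻¹, ?_⟩, ?_⟩ (hsep (h' • x))
    · exact mul_mem (mul_mem (inv_mem hg) (hHN hh)) (inv_mem (hHN hh'))
    · simp [Subgroup.smul_def, mul_smul, hx]

end MulAction

end

theorem stmt_12 {G : Type*} [Group G] {Ω : Type*} [MulAction G Ω]
    (htrans : MulAction.IsPretransitive G Ω)
    (c : G) (hc : c ∈ Subgroup.center G) (hc2 : orderOf c = 2)
    (Gbar : Subgroup G)
    (hcomp₁ : Subgroup.zpowers c ⊓ Gbar = ⊥)
    (hcomp₂ : Subgroup.zpowers c ⊔ Gbar = ⊤)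
    (horb : Nat.card (MulAction.orbitRel.Quotient Gbar Ω) = 2)
    (H : Subgroup G) (hHG : H ≤ Gbar) (hHidx : H.relIndex Gbar = 2)
    (hHtrans : ∀ x y : Ω, ∃ h ∈ H, h • x = y ∨ c • (h • x) = y)
    (g : G) (hg : g ∈ Gbar) (hgH : g ∉ H) :
    Subgroup.zpowers c ⊓ (H ⊔ Subgroup.zpowers (c * g)) = ⊥ ∧
    Subgroup.zpowers c ⊔ (H ⊔ Subgroup.zpowers (c * g)) = ⊤ ∧
    ∀ x y : Ω, ∃ k ∈ H ⊔ Subgroup.zpowers (c * g), k • x = y := by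
  have hcc : c * c = 1 := by rw [← sq, ← hc2, pow_orderOf_eq_one]
  have hcGbar : c ∉ Gbar := fun h => by
    have : c = 1 := (eq_bot_iff_forall _).1 hcomp₁ c ⟨mem_zpowers c, h⟩
    simp [this] at hc2
  have hsep : ∀ w : Ω, c • w ∉ orbit Gbar w := fun w hw => by
    have := (pretransitive_iff_subsingleton_quotient Gbar Ω).1
      (isPretransitive_of_smul_mem_orbit hc hcc hcomp₂ hw)
    have := Nat.card_eq_one_iff_unique.2 ⟨this, (Nat.card_pos_iff.1 (by omega)).1⟩
    omega
  have hK := sup_zpowers_mul_eq_twist hHG hHidx hc hcc hg hgH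
  refine ⟨?_, ?_, exists_mem_sup_zpowers_smul_eq hHG hg hHtrans hsep⟩
  · rw [hK]
    exact zpowers_inf_twist hcGbar
  · rw [hK, zpowers_sup_twist, hcomp₂]
end

section
/- Let G be a group acting transitively on Ω, let C = ⟨c⟩ ⊴ G be a normal subgroup of order 2 acting without fixed points on Ω, let Ḡ be a complement of C with exactly two orbits on Ω, and let K be a complement of C in G that acts transitively on Ω. Then K ∩ Ḡ has index 2 in both K and Ḡ, has exactly two orbits on Ω, and its image in G/C acts transitively on the set of C-orbits. -/
/-!
Both complements of `C = ⟨c⟩` have index `2` in `G`. An element of `Ḡ` moving a point `x` to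
`c • x` would make `Ḡ` transitive, so an element `k ∈ K` with `k • x = c • x` lies outside `Ḡ`, and
`c * k ∈ Ḡ \ K` fixes `x`. These elements show that neither of `K`, `Ḡ` contains the other, so
`K ⊓ Ḡ` has index `2` in both; and since `Ḡ \ K` meets every point stabiliser, `K ⊓ Ḡ` has the
same orbits as `Ḡ`.
-/

open Subgroup MulAction

namespace Subgroup

variable {G : Type*} [Group G] {H : Subgroup G}

theorem index_eq_card_of_inf_eq_bot_of_sup_eq_top {N : Subgroup G} [N.Normal]
    (hinf : N ⊓ H = ⊥) (hsup : N ⊔ H = ⊤) : H.index = Nat.card N :=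
  (isComplement'_of_disjoint_and_mul_eq_univ (disjoint_iff.2 hinf)
    (by rw [← normal_mul, hsup, coe_top])).index_eq_card

theorem mul_mem_of_index_eq_two (hH : H.index = 2) {a b : G} (ha : a ∉ H) (hb : b ∉ H) :
    a * b ∈ H :=
  (mul_mem_iff_of_index_two hH).2 (iff_of_false ha hb)

theorem relIndex_eq_two_of_index_eq_two (hH : H.index = 2) {L : Subgroup G} (hL : ¬L ≤ H) :
    H.relIndex L = 2 := by
  have := normal_of_index_eq_two hH
  have hdvd : H.relIndex L ∣ 2 := hH ▸ relIndex_dvd_index_of_normal H L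
  exact ((Nat.dvd_prime Nat.prime_two).1 hdvd).resolve_left (mt relIndex_eq_one.1 hL)

end Subgroup

theorem MulAction.not_isPretransitive_of_one_lt_card {M α : Type*} [Group M] [MulAction M α]
    (hM : 1 < Nat.card (orbitRel.Quotient M α)) : ¬IsPretransitive M α := fun h => by
  have := (pretransitive_iff_subsingleton_quotient M α).1 h
  exact hM.not_ge (Finite.card_le_one_iff_subsingleton.2 this)

section Action

variable {G Ω : Type*} [Group G] [MulAction G Ω] {H K : Subgroup G} {c : G}

theorem exists_mem_smul_eq_or_smul_eq_smul [IsPretransitive G Ω] (hH : H.index = 2)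
    (hc : c ∉ H) (x y : Ω) : ∃ h ∈ H, h • x = y ∨ h • x = c • y := by
  obtain ⟨g, hg⟩ := exists_smul_eq G x y
  by_cases hgH : g ∈ H
  · exact ⟨g, hgH, Or.inl hg⟩
  · exact ⟨c * g, mul_mem_of_index_eq_two hH hc hgH, Or.inr (by rw [mul_smul, hg])⟩

theorem isPretransitive_of_index_eq_two_of_smul_eq [IsPretransitive G Ω] (hH : H.index = 2)
    (hc : c ∉ H) {h : G} (hh : h ∈ H) {x : Ω} (hx : h • x = c • x) : IsPretransitive H Ω := by
  refine IsPretransitive.of_orbit (x₀ := x) fun y => ?_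
  obtain ⟨g, rfl⟩ := exists_smul_eq G x y
  by_cases hgH : g ∈ H
  · exact ⟨⟨g, hgH⟩, rfl⟩
  · have hgc : g * c⁻¹ ∈ H := mul_mem_of_index_eq_two hH hgH (inv_mem_iff.not.2 hc)
    refine ⟨⟨g * c⁻¹ * h, mul_mem hgc hh⟩, ?_⟩
    change (g * c⁻¹ * h) • x = g • x
    rw [mul_smul, hx, mul_smul, inv_smul_smul]

theorem exists_mem_inf_smul_eq (hK : K.index = 2)
    (hfix : ∀ x : Ω, ∃ g ∈ H, g ∉ K ∧ g • x = x) {x y : Ω} (hxy : ∃ h ∈ H, h • x = y) :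
    ∃ h ∈ K ⊓ H, h • x = y := by
  obtain ⟨h, hh, rfl⟩ := hxy
  by_cases hhK : h ∈ K
  · exact ⟨h, ⟨hhK, hh⟩, rfl⟩
  · obtain ⟨g, hg, hgK, hgx⟩ := hfix x
    exact ⟨h * g, ⟨mul_mem_of_index_eq_two hK hhK hgK, mul_mem hh hg⟩, by rw [mul_smul, hgx]⟩

theorem orbitRel_inf_eq_of_index_eq_two (hK : K.index = 2)
    (hfix : ∀ x : Ω, ∃ g ∈ H, g ∉ K ∧ g • x = x) :
    orbitRel ↥(K ⊓ H) Ω = orbitRel H Ω := by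
  ext x y
  simp only [orbitRel_apply, mem_orbit_iff, Subtype.exists, Subgroup.mk_smul, exists_prop]
  exact ⟨fun ⟨h, hh, hy⟩ => ⟨h, hh.2, hy⟩, exists_mem_inf_smul_eq hK hfix⟩

end Action

theorem stmt_13_general {G : Type*} [Group G] {Ω : Type*} [MulAction G Ω]
    (htrans : MulAction.IsPretransitive G Ω)
    (c : G) (hc2 : orderOf c = 2) (hNormal : (Subgroup.zpowers c).Normal)
    (Gbar K : Subgroup G)
    (hGbar₁ : Subgroup.zpowers c ⊓ Gbar = ⊥)
    (hGbar₂ : Subgroup.zpowers c ⊔ Gbar = ⊤)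
    (horb : Nat.card (MulAction.orbitRel.Quotient Gbar Ω) = 2)
    (hK₁ : Subgroup.zpowers c ⊓ K = ⊥)
    (hK₂ : Subgroup.zpowers c ⊔ K = ⊤)
    (hKtrans : ∀ x y : Ω, ∃ k ∈ K, k • x = y) :
    (K ⊓ Gbar).relIndex K = 2 ∧
    (K ⊓ Gbar).relIndex Gbar = 2 ∧
    Nat.card (MulAction.orbitRel.Quotient ↥(K ⊓ Gbar) Ω) = 2 ∧
    ∀ x y : Ω, ∃ h ∈ K ⊓ Gbar, h • x = y ∨ h • x = c • y := by
  have hc1 : c ≠ 1 := by rintro rfl; simp at hc2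
  have hcc : c * c = 1 := by rw [← pow_two, ← hc2, pow_orderOf_eq_one]
  have hindex {H : Subgroup G} (h₁ : zpowers c ⊓ H = ⊥) (h₂ : zpowers c ⊔ H = ⊤) :
      H.index = 2 := by
    rw [index_eq_card_of_inf_eq_bot_of_sup_eq_top h₁ h₂, Nat.card_zpowers, hc2]
  have hc_notMem {H : Subgroup G} (h₁ : zpowers c ⊓ H = ⊥) : c ∉ H :=
    fun h => hc1 (disjoint_def.1 (disjoint_iff.2 h₁) (mem_zpowers c) h)
  have hGbar := hindex hGbar₁ hGbar₂
  have hK := hindex hK₁ hK₂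
  have hmove (x : Ω) : ∃ k ∈ K, k ∉ Gbar ∧ k • x = c • x := by
    obtain ⟨k, hk, hkx⟩ := hKtrans x (c • x)
    exact ⟨k, hk, fun h => not_isPretransitive_of_one_lt_card (by omega)
      (isPretransitive_of_index_eq_two_of_smul_eq hGbar (hc_notMem hGbar₁) h hkx), hkx⟩
  have hfix (x : Ω) : ∃ g ∈ Gbar, g ∉ K ∧ g • x = x := by
    obtain ⟨k, hk, hkGbar, hkx⟩ := hmove x
    exact ⟨c * k, mul_mem_of_index_eq_two hGbar (hc_notMem hGbar₁) hkGbar,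
      (mul_mem_cancel_right hk).not.2 (hc_notMem hK₁),
      by rw [mul_smul, hkx, smul_smul, hcc, one_smul]⟩
  obtain ⟨x⟩ : Nonempty Ω := (nonempty_quotient_iff _).1
    (Nat.card_pos_iff.1 (by omega : 0 < Nat.card (orbitRel.Quotient Gbar Ω))).1
  obtain ⟨k, hk, hkGbar, -⟩ := hmove x
  obtain ⟨g, hg, hgK, -⟩ := hfix x
  refine ⟨?_, ?_, ?_, fun y z => ?_⟩
  · rw [inf_relIndex_left]
    exact relIndex_eq_two_of_index_eq_two hGbar fun h => hkGbar (h hk)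
  · rw [inf_relIndex_right]
    exact relIndex_eq_two_of_index_eq_two hK fun h => hgK (h hg)
  · change Nat.card (Quotient _) = 2
    rwa [orbitRel_inf_eq_of_index_eq_two hK hfix]
  · obtain ⟨h, hh, hyz | hyz⟩ := exists_mem_smul_eq_or_smul_eq_smul hGbar (hc_notMem hGbar₁) y z
    all_goals obtain ⟨h', hh', e⟩ := exists_mem_inf_smul_eq hK hfix ⟨h, hh, hyz⟩
    exacts [⟨h', hh', Or.inl e⟩, ⟨h', hh', Or.inr e⟩]

theorem stmt_13 {G : Type*} [Group G] {Ω : Type*} [MulAction G Ω]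
    (htrans : MulAction.IsPretransitive G Ω)
    (c : G) (hc2 : orderOf c = 2) (hNormal : (Subgroup.zpowers c).Normal)
    (hsemireg : ∀ x : Ω, c • x ≠ x)
    (Gbar K : Subgroup G)
    (hGbar₁ : Subgroup.zpowers c ⊓ Gbar = ⊥)
    (hGbar₂ : Subgroup.zpowers c ⊔ Gbar = ⊤)
    (horb : Nat.card (MulAction.orbitRel.Quotient Gbar Ω) = 2)
    (hK₁ : Subgroup.zpowers c ⊓ K = ⊥)
    (hK₂ : Subgroup.zpowers c ⊔ K = ⊤)
    (hKtrans : ∀ x y : Ω, ∃ k ∈ K, k • x = y) :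
    (K ⊓ Gbar).relIndex K = 2 ∧
    (K ⊓ Gbar).relIndex Gbar = 2 ∧
    Nat.card (MulAction.orbitRel.Quotient ↥(K ⊓ Gbar) Ω) = 2 ∧
    ∀ x y : Ω, ∃ h ∈ K ⊓ Gbar, h • x = y ∨ h • x = c • y :=
  stmt_13_general htrans c hc2 hNormal Gbar K hGbar₁ hGbar₂ horb hK₁ hK₂ hKtrans
end

section
/- Let X be a connected simple graph and let f : V → V → ZMod 2 be a symmetric function on adjacent pairs. Then the voltage of every closed walk W equals the parity of the length of W if and only if there exists g : V → ZMod 2 such that f u v = g u + g v + 1 for every edge {u,v}. -/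
/-!
Put `h u v = f u v + 1`. The voltage of `h` along a walk is the voltage of `f` plus the parity
of the length, so the hypothesis says that `h` has zero voltage around every closed walk. On a
connected graph this is the classical criterion for `h` to be a coboundary `g v - g u`: define
`g u` as the voltage of `h` along any walk from a fixed base vertex to `u`. In `ZMod 2`, the
identity `f u v + 1 = g v - g u` is `f u v = g u + g v + 1`.
-/

namespace SimpleGraph.Walk

variable {V A : Type*} [AddCommGroup A] {X : SimpleGraph V}

def voltage (f : V → V → A) {u v : V} (p : X.Walk u v) : A :=
  (p.darts.map fun d => f d.fst d.snd).sum

@[simp]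
theorem voltage_nil (f : V → V → A) {u : V} : (nil : X.Walk u u).voltage f = 0 := rfl

@[simp]
theorem voltage_cons (f : V → V → A) {u v w : V} (h : X.Adj u v) (p : X.Walk v w) :
    (cons h p).voltage f = f u v + p.voltage f := rfl

@[simp]
theorem voltage_append (f : V → V → A) {u v w : V} (p : X.Walk u v) (q : X.Walk v w) :
    (p.append q).voltage f = p.voltage f + q.voltage f := by
  simp [voltage, darts_append]

theorem voltage_congr {f f' : V → V → A} (hff' : ∀ u v, X.Adj u v → f u v = f' u v)
    {u v : V} (p : X.Walk u v) : p.voltage f = p.voltage f' := by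
  induction p with
  | nil => rfl
  | cons h p ih => simp [hff' _ _ h, ih]

theorem voltage_reverse {f : V → V → A} (hf : ∀ u v, X.Adj u v → f v u = -f u v)
    {u v : V} (p : X.Walk u v) : p.reverse.voltage f = -p.voltage f := by
  induction p with
  | nil => simp
  | cons h p ih => simp [reverse_cons, ih, hf _ _ h, add_comm]

theorem voltage_add_const (f : V → V → A) (c : A) {u v : V} (p : X.Walk u v) :
    p.voltage (fun x y => f x y + c) = p.voltage f + p.length • c := by
  induction p with
  | nil => simp
  | cons h p ih => simp only [voltage_cons, ih, length_cons, succ_nsmul]; abel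

theorem voltage_sub_eq (g : V → A) {u v : V} (p : X.Walk u v) :
    p.voltage (fun x y => g y - g x) = g v - g u := by
  induction p with
  | nil => simp
  | cons h p ih => simp only [voltage_cons, ih]; abel

end SimpleGraph.Walk

open SimpleGraph Walk

theorem SimpleGraph.Connected.forall_voltage_eq_zero_iff {V A : Type*} [AddCommGroup A]
    {X : SimpleGraph V} (hconn : X.Connected) {f : V → V → A}
    (hf : ∀ u v, X.Adj u v → f v u = -f u v) :
    (∀ (u : V) (p : X.Walk u u), p.voltage f = 0) ↔
      ∃ g : V → A, ∀ u v, X.Adj u v → f u v = g v - g u := by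
  refine ⟨fun hclosed => ?_, fun ⟨g, hg⟩ u p => ?_⟩
  · obtain ⟨v₀⟩ := hconn.nonempty
    let walk (u : V) : X.Walk v₀ u := (hconn v₀ u).some
    refine ⟨fun u => (walk u).voltage f, fun u v huv => ?_⟩
    have hcycle := hclosed v₀ ((walk u).append (cons huv (walk v).reverse))
    rw [voltage_append, voltage_cons, voltage_reverse hf] at hcycle
    rw [← sub_eq_zero, ← hcycle]
    abel
  · rw [voltage_congr hg, voltage_sub_eq, sub_self]

theorem stmt_15 {V : Type*} (X : SimpleGraph V) (hconn : X.Connected)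
    (f : V → V → ZMod 2) (hsymm : ∀ u v, X.Adj u v → f u v = f v u) :
    (∀ (u : V) (W : X.Walk u u),
        (W.darts.map fun d => f d.toProd.1 d.toProd.2).sum = (W.length : ZMod 2)) ↔
    ∃ g : V → ZMod 2, ∀ u v, X.Adj u v → f u v = g u + g v + 1 := by
  have hparity {u : V} (W : X.Walk u u) :
      W.voltage f = W.length ↔ W.voltage (fun x y => f x y + 1) = 0 := by
    rw [voltage_add_const, nsmul_one, ← CharTwo.sub_eq_add, sub_eq_zero]
  have hanti (u v : V) (h : X.Adj u v) : f v u + 1 = -(f u v + 1) := by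
    rw [ZMod.neg_eq_self_mod_two, hsymm u v h]
  have hcoboundary (g : V → ZMod 2) (u v : V) :
      f u v + 1 = g v - g u ↔ f u v = g u + g v + 1 := by
    rw [CharTwo.sub_eq_add, CharTwo.add_eq_iff_eq_add, add_comm (g v)]
  change (∀ (u : V) (W : X.Walk u u), W.voltage f = W.length) ↔ _
  simp only [hparity, hconn.forall_voltage_eq_zero_iff hanti, hcoboundary]
end
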